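/- Let P be a connected shrub with at least two vertices. Then for any two distinct vertices a, a' of height 0, there exists a vertex b covering both a and a'. -/

import Mathlib

/-!
Call a height-0 vertex `x` a foot of `v` if `x` is reached from `v` by a chain of covers.
Pattern (a) makes "equal or with a common cover" an equivalence relation, and pattern (b)
says that two vertices of height `≥ 1` covered by a common vertex cover a common vertex;
by induction on the height, all feet of a vertex are therefore related.
Feet of adjacent vertices are related too, since one of them lies below the other, so
by connectedness any two height-0 vertices are related.
-/

/-- A shrub on a finite vertex type `V`: a graph together with a height function
satisfying the shrub axioms (edges between consecutive heights, every positive-height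
vertex covers a vertex one lower, and the two forbidden induced patterns). -/
structure Shrub (V : Type*) [Fintype V] [DecidableEq V] where
  adj : V → V → Prop
  symm : ∀ a b, adj a b → adj b a
  loopless : ∀ a, ¬ adj a a
  height : V → ℕ
  edge_height : ∀ a b, adj a b → height a = height b + 1 ∨ height b = height a + 1
  covers_below : ∀ a, 0 < height a → ∃ b, adj a b ∧ height b + 1 = height a
  patternA : ∀ a b c d e, a ≠ b → c ≠ d → c ≠ e → d ≠ e →
    height a = height c + 1 → height b = height c + 1 →
    height d = height c → height e = height c →
    adj a c → adj a d → adj b d → adj b e → ¬ adj a e → ¬ adj b c → False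
  patternB : ∀ a b c d, b ≠ c →
    height a = height d + 2 → height b = height d + 1 → height c = height d + 1 →
    adj a b → adj a c → adj b d → ¬ adj c d → False

variable {V : Type*} [Fintype V] [DecidableEq V]

/-- `P.Covers j i` means the vertex `j` covers `i` : they are joined by an edge and
`j` is one level higher than `i` (edges are oriented downward). -/
def Shrub.Covers (P : Shrub V) (j i : V) : Prop :=
  P.adj i j ∧ P.height i + 1 = P.height j

/-- The underlying simple graph of a shrub. -/
def Shrub.graph (P : Shrub V) : SimpleGraph V where
  Adj := P.adj
  symm := ⟨by intro a b h; exact P.symm a b h⟩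
  loopless := ⟨by intro a h; exact P.loopless a h⟩

namespace Shrub

variable (P : Shrub V)

def IsFoot (v x : V) : Prop :=
  Relation.ReflTransGen P.Covers v x ∧ P.height x = 0

def SameOrCommonCover (x y : V) : Prop :=
  x = y ∨ ∃ b, P.Covers b x ∧ P.Covers b y

def FeetRelated (u v : V) : Prop :=
  ∀ x y, P.IsFoot u x → P.IsFoot v y → P.SameOrCommonCover x y

variable {P}

theorem Covers.height_lt {v u : V} (h : P.Covers v u) : P.height u < P.height v := by
  have := h.2; omega

theorem exists_isFoot (v : V) : ∃ x, P.IsFoot v x := by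
  by_cases hv : P.height v = 0
  · exact ⟨v, .refl, hv⟩
  obtain ⟨u, hvu, hu⟩ := P.covers_below v (Nat.pos_of_ne_zero hv)
  have hcov : P.Covers v u := ⟨P.symm _ _ hvu, hu⟩
  obtain ⟨x, hux, hx⟩ := exists_isFoot u
  exact ⟨x, .head hcov hux, hx⟩
termination_by P.height v
decreasing_by exact hcov.height_lt

theorem IsFoot.eq_of_height_eq_zero {v x : V} (h : P.IsFoot v x) (hv : P.height v = 0) :
    x = v := by
  rcases h.1.cases_head with rfl | ⟨u, hvu, -⟩
  · rfl
  · exact absurd hvu.height_lt (by omega)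

theorem IsFoot.of_covers {v u x : V} (hvu : P.Covers v u) (h : P.IsFoot u x) :
    P.IsFoot v x :=
  ⟨.head hvu h.1, h.2⟩

theorem sameOrCommonCover_equivalence : Equivalence P.SameOrCommonCover where
  refl _ := .inl rfl
  symm := by
    rintro x y (rfl | ⟨b, hbx, hby⟩)
    exacts [.inl rfl, .inr ⟨b, hby, hbx⟩]
  trans := by
    rintro x y z (rfl | ⟨b, hbx, hby⟩) (rfl | ⟨c, hcy, hcz⟩)
    · exact .inl rfl
    · exact .inr ⟨c, hcy, hcz⟩
    · exact .inr ⟨b, hbx, hby⟩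
    have := hbx.2; have := hby.2; have := hcy.2; have := hcz.2
    by_cases hxz : x = z
    · exact .inl hxz
    by_cases hbz : P.adj b z
    · exact .inr ⟨b, hbx, P.symm _ _ hbz, by omega⟩
    by_cases hcx : P.adj c x
    · exact .inr ⟨c, ⟨P.symm _ _ hcx, by omega⟩, hcz⟩
    have hbc : b ≠ c := fun h => hbz (h ▸ P.symm _ _ hcz.1)
    have hxy : x ≠ y := fun h => hcx (h ▸ P.symm _ _ hcy.1)
    have hyz : y ≠ z := fun h => hbz (h ▸ P.symm _ _ hby.1)
    exact P.patternA b c x y z hbc hxy hxz hyz (by omega) (by omega) (by omega) (by omega)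
      (P.symm _ _ hbx.1) (P.symm _ _ hby.1) (P.symm _ _ hcy.1) (P.symm _ _ hcz.1) hbz hcx |>.elim

theorem exists_common_cover_of_covers {v u u' : V} (hu : P.Covers v u) (hu' : P.Covers v u')
    (hpos : 0 < P.height u) : ∃ d, P.Covers u d ∧ P.Covers u' d := by
  obtain ⟨d, hud, hd⟩ := P.covers_below u hpos
  have := hu.2; have := hu'.2
  refine ⟨d, ⟨P.symm _ _ hud, hd⟩, P.symm _ _ ?_, by omega⟩
  by_cases huu' : u = u'
  · exact huu' ▸ hud
  by_contra hu'd
  exact P.patternB v u u' d huu' (by omega) (by omega) (by omega)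
    (P.symm _ _ hu.1) (P.symm _ _ hu'.1) hud hu'd

theorem feetRelated_self (v : V) : P.FeetRelated v v := by
  intro x y hx hy
  rcases hx.1.cases_head with rfl | ⟨u, hvu, hux⟩
  · exact .inl (hy.eq_of_height_eq_zero hx.2).symm
  rcases hy.1.cases_head with rfl | ⟨u', hvu', hu'y⟩
  · exact absurd hvu.height_lt (by have := hy.2; omega)
  by_cases hu : P.height u = 0
  · have hu' : P.height u' = 0 := by have := hvu.2; have := hvu'.2; omega
    rw [IsFoot.eq_of_height_eq_zero ⟨hux, hx.2⟩ hu, IsFoot.eq_of_height_eq_zero ⟨hu'y, hy.2⟩ hu']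
    exact .inr ⟨v, hvu, hvu'⟩
  obtain ⟨d, hud, hu'd⟩ := exists_common_cover_of_covers hvu hvu' (Nat.pos_of_ne_zero hu)
  obtain ⟨z, hz⟩ := exists_isFoot d
  have hxz := feetRelated_self u x z ⟨hux, hx.2⟩ (hz.of_covers hud)
  have hzy := feetRelated_self u' z y (hz.of_covers hu'd) ⟨hu'y, hy.2⟩
  exact sameOrCommonCover_equivalence.trans hxz hzy
termination_by P.height v
decreasing_by
  · exact hvu.height_lt
  · exact hvu'.height_lt

theorem FeetRelated.symm {u v : V} (h : P.FeetRelated u v) : P.FeetRelated v u :=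
  fun x y hx hy => sameOrCommonCover_equivalence.symm (h y x hy hx)

theorem FeetRelated.trans {u v w : V} (huv : P.FeetRelated u v) (hvw : P.FeetRelated v w) :
    P.FeetRelated u w := by
  intro x z hx hz
  obtain ⟨y, hy⟩ := exists_isFoot v
  exact sameOrCommonCover_equivalence.trans (huv x y hx hy) (hvw y z hy hz)

theorem feetRelated_of_covers {u v : V} (h : P.Covers u v) : P.FeetRelated u v :=
  fun x y hx hy => feetRelated_self u x y hx (hy.of_covers h)

theorem feetRelated_of_adj {u v : V} (h : P.adj u v) : P.FeetRelated u v := by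
  rcases P.edge_height u v h with huv | hvu
  · exact feetRelated_of_covers ⟨P.symm _ _ h, huv.symm⟩
  · exact (feetRelated_of_covers ⟨h, hvu.symm⟩).symm

theorem feetRelated_of_reachable {u v : V} (h : P.graph.Reachable u v) : P.FeetRelated u v := by
  rw [SimpleGraph.reachable_iff_reflTransGen] at h
  induction h with
  | refl => exact feetRelated_self u
  | tail _ hadj ih => exact ih.trans (feetRelated_of_adj hadj)

end Shrub

theorem stmt2_general (P : Shrub V) (hconn : P.graph.Connected)
    (a a' : V) (hne : a ≠ a') (ha : P.height a = 0) (ha' : P.height a' = 0) :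
    ∃ b, P.Covers b a ∧ P.Covers b a' :=
  (Shrub.feetRelated_of_reachable (hconn a a') a a' ⟨.refl, ha⟩ ⟨.refl, ha'⟩).resolve_left hne

/-- in a connected shrub with at least two vertices, any two distinct
height-0 vertices have a common cover. -/
theorem stmt2 (P : Shrub V) (hconn : P.graph.Connected) (hnt : Nontrivial V)
    (a a' : V) (hne : a ≠ a') (ha : P.height a = 0) (ha' : P.height a' = 0) :
    ∃ b, P.Covers b a ∧ P.Covers b a' :=
  stmt2_general P hconn a a' hne ha ha'
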